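/- Let W1 ∈ ℝ^{m×k}, W2 ∈ ℝ^{d×m}, and let V ∈ ℝ^{k×n} be a matrix with rank(V) ≤ ω. Then ‖W2 ReLU(W1 V)‖_F ≤ √ω · ‖W2‖_2 · ‖W1‖_2 · ‖V‖_2, where ReLU(t) = max(t, 0) is applied entrywise. -/

import Mathlib

open scoped NNReal
open scoped Matrix

/-- The spectral norm (largest singular value) of a real matrix. -/
noncomputable def specNorm {p q : ℕ} (A : Matrix (Fin p) (Fin q) ℝ) : ℝ :=
  ‖LinearMap.toContinuousLinearMap (Matrix.toEuclideanLin A)‖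

/-- The Frobenius norm of a real matrix. -/
noncomputable def frobNorm {p q : ℕ} (A : Matrix (Fin p) (Fin q) ℝ) : ℝ :=
  Real.sqrt (∑ i, ∑ j, (A i j) ^ 2)

/-- The singular values of a real matrix: square roots of the eigenvalues of `Aᴴ * A`. -/
noncomputable def singVal {p q : ℕ} (A : Matrix (Fin p) (Fin q) ℝ) (j : Fin q) : ℝ :=
  Real.sqrt ((Matrix.isHermitian_conjTranspose_mul_self A).eigenvalues j)

/-- The ε-rank of a real matrix: the number of singular values `σ_j` with
`σ_j > ε σ_1`, where `σ_1 = ‖A‖₂` is the largest singular value. -/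
noncomputable def epsRank {p q : ℕ} (ε : ℝ) (A : Matrix (Fin p) (Fin q) ℝ) : ℕ :=
  (Finset.univ.filter fun j : Fin q => ε * specNorm A < singVal A j).card

lemma specNorm_nonneg {p q : ℕ} (A : Matrix (Fin p) (Fin q) ℝ) : 0 ≤ specNorm A :=
  norm_nonneg _

lemma mulVec_sq_sum_le {p q : ℕ} (A : Matrix (Fin p) (Fin q) ℝ) (x : Fin q → ℝ) :
    ∑ i, (A.mulVec x i) ^ 2 ≤ (specNorm A) ^ 2 * ∑ j, (x j) ^ 2 := by
  have h := (LinearMap.toContinuousLinearMap (Matrix.toEuclideanLin A)).le_opNorm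
    ((WithLp.equiv 2 (Fin q → ℝ)).symm x)
  have hnorm1 : ‖LinearMap.toContinuousLinearMap (Matrix.toEuclideanLin A)
      ((WithLp.equiv 2 (Fin q → ℝ)).symm x)‖ = Real.sqrt (∑ i, (A.mulVec x i) ^ 2) := by
    rw [LinearMap.coe_toContinuousLinearMap', Matrix.toEuclideanLin_apply,
      EuclideanSpace.norm_eq]
    simp [sq_abs]
  have hnorm2 : ‖(WithLp.equiv 2 (Fin q → ℝ)).symm x‖ = Real.sqrt (∑ j, (x j) ^ 2) := by
    rw [EuclideanSpace.norm_eq]; simp [sq_abs]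
  rw [hnorm1, hnorm2] at h
  have h2 := pow_le_pow_left₀ (Real.sqrt_nonneg _) h 2
  rw [Real.sq_sqrt (by positivity), mul_pow, Real.sq_sqrt (by positivity)] at h2
  exact h2

lemma frob_sq_mul_le {a b c : ℕ} (A : Matrix (Fin a) (Fin b) ℝ) (B : Matrix (Fin b) (Fin c) ℝ) :
    ∑ i, ∑ j, ((A * B) i j) ^ 2 ≤ (specNorm A) ^ 2 * ∑ i, ∑ j, (B i j) ^ 2 := by
  rw [Finset.sum_comm, Finset.sum_comm (s := Finset.univ) (t := Finset.univ)
    (f := fun i j => (B i j) ^ 2), Finset.mul_sum]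
  apply Finset.sum_le_sum
  intro j _
  have := mulVec_sq_sum_le A (fun r => B r j)
  simpa [Matrix.mul_apply, Matrix.mulVec, dotProduct] using this

lemma frobNorm_mul_le {a b c : ℕ} (A : Matrix (Fin a) (Fin b) ℝ) (B : Matrix (Fin b) (Fin c) ℝ) :
    frobNorm (A * B) ≤ specNorm A * frobNorm B := by
  unfold frobNorm
  rw [← Real.sqrt_sq (specNorm_nonneg A), ← Real.sqrt_mul (by positivity)]
  exact Real.sqrt_le_sqrt (frob_sq_mul_le A B)

lemma frobNorm_relu_le {a b : ℕ} (M : Matrix (Fin a) (Fin b) ℝ) :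
    frobNorm (M.map (fun t => max t 0)) ≤ frobNorm M := by
  unfold frobNorm
  apply Real.sqrt_le_sqrt
  apply Finset.sum_le_sum; intro i _
  apply Finset.sum_le_sum; intro j _
  simp only [Matrix.map_apply]
  rw [← sq_abs (M i j)]
  apply sq_le_sq'
  · exact le_trans (neg_nonpos.mpr (abs_nonneg _)) (le_max_right _ _)
  · exact max_le (le_abs_self _) (abs_nonneg _)

lemma sum_eigenvalues_eq_trace {n : Type*} [Fintype n] [DecidableEq n]
    {A : Matrix n n ℝ} (hA : A.IsHermitian) :
    ∑ i, hA.eigenvalues i = A.trace := by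
  rw [hA.trace_eq_sum_eigenvalues]
  simp

lemma frobNorm_le_sqrt_rank {k n : ℕ} (V : Matrix (Fin k) (Fin n) ℝ) :
    frobNorm V ≤ Real.sqrt V.rank * specNorm V := by
  classical
  have hH : (Vᵀ * V).IsHermitian := by simpa using Matrix.isHermitian_conjTranspose_mul_self V
  have htrace : ∑ j, hH.eigenvalues j = ∑ i, ∑ j, (V i j) ^ 2 := by
    rw [sum_eigenvalues_eq_trace hH, Matrix.trace, Finset.sum_comm]
    apply Finset.sum_congr rfl
    intro i _
    simp [Matrix.diag, Matrix.mul_apply, Matrix.transpose_apply, sq]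
  have heig : ∀ j, hH.eigenvalues j ≤ (specNorm V) ^ 2 := by
    intro j
    set v : Fin n → ℝ := ⇑(hH.eigenvectorBasis j) with hvdef
    have hnv : ∑ i, (v i) ^ 2 = 1 := by
      have h2 : ‖hH.eigenvectorBasis j‖ = 1 := hH.eigenvectorBasis.orthonormal.1 j
      rw [EuclideanSpace.norm_eq] at h2
      have h3 := congrArg (· ^ 2) h2
      simp only [one_pow] at h3
      rw [Real.sq_sqrt (by positivity)] at h3
      simpa [sq_abs] using h3
    have hdot : hH.eigenvalues j = ∑ i, (V.mulVec v i) ^ 2 := by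
      rw [hH.eigenvalues_eq j]
      simp only [RCLike.re_to_real, star_trivial, ← Matrix.mulVec_mulVec,
        Matrix.dotProduct_mulVec, Matrix.vecMul_transpose]
      rw [← Matrix.dotProduct_mulVec]
      simp [dotProduct, Matrix.mulVec, sq, hvdef]
    rw [hdot]
    calc ∑ i, (V.mulVec v i) ^ 2 ≤ (specNorm V) ^ 2 * ∑ i, (v i) ^ 2 := mulVec_sq_sum_le V v
      _ = (specNorm V) ^ 2 := by rw [hnv, mul_one]
  have hnn : ∀ j, 0 ≤ hH.eigenvalues j := fun j =>
    Matrix.PosSemidef.eigenvalues_nonneg (by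
      simpa using Matrix.posSemidef_conjTranspose_mul_self V) j
  have hrank : V.rank = (Finset.univ.filter fun j => hH.eigenvalues j ≠ 0).card := by
    rw [← Matrix.rank_transpose_mul_self V, hH.rank_eq_card_non_zero_eigs,
      Fintype.card_subtype]
  have hsum : ∑ i, ∑ j, (V i j) ^ 2 ≤ (V.rank : ℝ) * (specNorm V) ^ 2 := by
    rw [← htrace]
    have hfilter : ∑ j, hH.eigenvalues j
        = ∑ j ∈ Finset.univ.filter (fun j => hH.eigenvalues j ≠ 0), hH.eigenvalues j :=
      (Finset.sum_filter_of_ne (fun x _ h => h)).symm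
    rw [hfilter, hrank]
    have := Finset.sum_le_card_nsmul
      (Finset.univ.filter fun j => hH.eigenvalues j ≠ 0) hH.eigenvalues ((specNorm V) ^ 2)
      (fun x _ => heig x)
    simpa [nsmul_eq_mul] using this
  unfold frobNorm
  calc Real.sqrt (∑ i, ∑ j, (V i j) ^ 2) ≤ Real.sqrt ((V.rank : ℝ) * (specNorm V) ^ 2) :=
        Real.sqrt_le_sqrt hsum
    _ = Real.sqrt V.rank * specNorm V := by
        rw [Real.sqrt_mul (by positivity), Real.sqrt_sq (specNorm_nonneg V)]

/-- `‖W₂ ReLU(W₁ V)‖_F ≤ √ω ‖W₂‖₂ ‖W₁‖₂ ‖V‖₂` when `rank V ≤ ω`. -/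
theorem frobenius_bound_of_low_rank
    (m k d n ω : ℕ)
    (W1 : Matrix (Fin m) (Fin k) ℝ) (W2 : Matrix (Fin d) (Fin m) ℝ)
    (V : Matrix (Fin k) (Fin n) ℝ) (hV : V.rank ≤ ω) :
    frobNorm (W2 * (W1 * V).map (fun t => max t 0)) ≤
      Real.sqrt ω * specNorm W2 * specNorm W1 * specNorm V := by
  have h0 : frobNorm V ≤ Real.sqrt ω * specNorm V := by
    calc frobNorm V ≤ Real.sqrt V.rank * specNorm V := frobNorm_le_sqrt_rank V
      _ ≤ Real.sqrt ω * specNorm V := by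
          apply mul_le_mul_of_nonneg_right _ (specNorm_nonneg V)
          exact Real.sqrt_le_sqrt (by exact_mod_cast hV)
  calc frobNorm (W2 * (W1 * V).map (fun t => max t 0))
      ≤ specNorm W2 * frobNorm ((W1 * V).map (fun t => max t 0)) := frobNorm_mul_le _ _
    _ ≤ specNorm W2 * frobNorm (W1 * V) :=
        mul_le_mul_of_nonneg_left (frobNorm_relu_le _) (specNorm_nonneg _)
    _ ≤ specNorm W2 * (specNorm W1 * frobNorm V) :=
        mul_le_mul_of_nonneg_left (frobNorm_mul_le _ _) (specNorm_nonneg _)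
    _ ≤ specNorm W2 * (specNorm W1 * (Real.sqrt ω * specNorm V)) := by
        apply mul_le_mul_of_nonneg_left _ (specNorm_nonneg _)
        exact mul_le_mul_of_nonneg_left h0 (specNorm_nonneg _)
    _ = Real.sqrt ω * specNorm W2 * specNorm W1 * specNorm V := by ring
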